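/- Let f : [0,T] → ℝ be continuous and nonnegative, and suppose there are nondecreasing continuous functions C₀, C : [0,∞) → [0,∞) such that f(t) ≤ C₀(f(0))·exp(t^{1/4}·C(f(t))) for all t ∈ [0,T]. If f(0) ≤ K₁ then there exist K > 0 and T̃ ∈ (0,T] depending only on K₁, C₀, C (not on f) such that f(t) ≤ K for all t ∈ [0,T̃]. -/

import Mathlib

/-!
At `t = 0` the hypothesis gives `f 0 ≤ C₀ (f 0) ≤ C₀ K₁`, so `f` starts strictly below
`K := 2 max (C₀ K₁) 0 + 1`. At a time `s` with `f s = K` the right-hand side is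
`C₀ (f 0) exp (s^{1/4} C K)`, and once `s` is so small that this exponential is below `2`, it is
`< K`. So on a short enough interval `f` never reaches `K`, and by the intermediate value theorem
it stays below `K`.
-/

open Set Filter Topology

theorem lt_of_continuousOn_of_ne {f : ℝ → ℝ} {a b K : ℝ} (hf : ContinuousOn f (Icc a b))
    (ha : f a < K) (hne : ∀ s ∈ Icc a b, f s ≠ K) : ∀ t ∈ Icc a b, f t < K := by
  intro t ht
  by_contra! hKt
  obtain ⟨s, hs, hfs⟩ := intermediate_value_Icc ht.1 (hf.mono (Icc_subset_Icc_right ht.2))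
    ⟨ha.le, hKt⟩
  exact hne s ⟨hs.1, hs.2.trans ht.2⟩ hfs

theorem exists_pos_forall_Icc_exp_rpow_mul_lt {p : ℝ} (hp : 0 < p) (c : ℝ) {M : ℝ}
    (hM : 1 < M) : ∃ δ > 0, ∀ s ∈ Icc 0 δ, Real.exp (s ^ p * c) < M := by
  have hcont : Continuous fun s : ℝ ↦ Real.exp (s ^ p * c) := by
    have := Real.continuous_rpow_const hp.le
    fun_prop
  have hlim : ∀ᶠ s in 𝓝 (0 : ℝ), Real.exp (s ^ p * c) < M := by
    refine hcont.continuousAt.eventually_lt continuousAt_const ?_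
    simpa [Real.zero_rpow hp.ne'] using hM
  exact mem_nhdsGE_iff_exists_Icc_subset.mp (nhdsWithin_le_nhds hlim)

theorem bootstrap_uniform_bound_general
    (T : ℝ) (hT : 0 < T) (C₀ C : ℝ → ℝ)
    (hC₀mono : Monotone C₀)
    (K₁ : ℝ) :
    ∃ K > 0, ∃ T' ∈ Ioc 0 T, ∀ f : ℝ → ℝ,
      ContinuousOn f (Icc 0 T) →
      (∀ t ∈ Icc 0 T, 0 ≤ f t) →
      (∀ t ∈ Icc 0 T, f t ≤ C₀ (f 0) * Real.exp (t ^ ((1 : ℝ) / 4) * C (f t))) →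
      f 0 ≤ K₁ →
      ∀ t ∈ Icc 0 T', f t ≤ K := by
  set K := 2 * max (C₀ K₁) 0 + 1
  obtain ⟨δ, hδ, hexp⟩ :=
    exists_pos_forall_Icc_exp_rpow_mul_lt (by norm_num : (0 : ℝ) < 1 / 4) (C K) one_lt_two
  refine ⟨K, by positivity, min T δ, ⟨lt_min hT hδ, min_le_left _ _⟩, ?_⟩
  intro f hf hf_nonneg hf_le hf0 t ht
  have hsub : Icc 0 (min T δ) ⊆ Icc 0 T := Icc_subset_Icc_right (min_le_left _ _)
  have h0 : (0 : ℝ) ∈ Icc 0 T := left_mem_Icc.mpr hT.le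
  have hf0_le : f 0 ≤ C₀ (f 0) := by
    simpa [Real.zero_rpow (by norm_num : (1 : ℝ) / 4 ≠ 0)] using hf_le 0 h0
  have hC₀f0 : C₀ (f 0) ≤ C₀ K₁ := hC₀mono hf0
  have hC₀f0_nonneg : 0 ≤ C₀ (f 0) := (hf_nonneg 0 h0).trans hf0_le
  refine (lt_of_continuousOn_of_ne (hf.mono hsub) ?_ ?_ t ht).le
  · linarith [le_max_left (C₀ K₁) 0]
  · intro s hs hfs
    have hexp_s := hexp s ⟨hs.1, hs.2.trans (min_le_right _ _)⟩
    refine lt_irrefl K ?_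
    calc K = f s := hfs.symm
      _ ≤ C₀ (f 0) * Real.exp (s ^ ((1 : ℝ) / 4) * C K) := hfs ▸ hf_le s (hsub hs)
      _ ≤ C₀ (f 0) * 2 := mul_le_mul_of_nonneg_left hexp_s.le hC₀f0_nonneg
      _ < K := by linarith [le_max_left (C₀ K₁) 0]

theorem bootstrap_uniform_bound
    (T : ℝ) (hT : 0 < T) (C₀ C : ℝ → ℝ)
    (hC₀cont : Continuous C₀) (hCcont : Continuous C)
    (hC₀mono : Monotone C₀) (hCmono : Monotone C)
    (hC₀nonneg : ∀ x, 0 ≤ x → 0 ≤ C₀ x) (hCnonneg : ∀ x, 0 ≤ x → 0 ≤ C x)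
    (K₁ : ℝ) (hK₁ : 0 ≤ K₁) :
    ∃ K > 0, ∃ T' ∈ Ioc 0 T, ∀ f : ℝ → ℝ,
      ContinuousOn f (Icc 0 T) →
      (∀ t ∈ Icc 0 T, 0 ≤ f t) →
      (∀ t ∈ Icc 0 T, f t ≤ C₀ (f 0) * Real.exp (t ^ ((1 : ℝ) / 4) * C (f t))) →
      f 0 ≤ K₁ →
      ∀ t ∈ Icc 0 T', f t ≤ K :=
  bootstrap_uniform_bound_general T hT C₀ C hC₀mono K₁
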